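/- arXiv:1909.10685 — 4 statements merged into one kernel-verified Lean document; each statement's English description precedes it below -/
import Mathlib

section
/- For every b ≥ 0 and every real x with -b ≤ x ≤ b, one has f(b + x, b) · x ≥ 0, where f(x,y) = ((x^4 + y^4)^{1/4} - 2^{1/4} y) · (x^4 + y^4)^{-3/4} · x^3. -/
/-- The SAF per-measurement gradient factor with k = 4, γ = 1. -/
noncomputable def safGrad (x y : ℝ) : ℝ :=
  ((x ^ 4 + y ^ 4) ^ ((1 : ℝ) / 4) - (2 : ℝ) ^ ((1 : ℝ) / 4) * y) *
    (x ^ 4 + y ^ 4) ^ (-(3 : ℝ) / 4) * x ^ 3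

/-- Sign property of the SAF gradient factor near `+b`. -/
theorem safGrad_sign_pos (b x : ℝ) (hb : 0 ≤ b) (hx₁ : -b ≤ x) (hx₂ : x ≤ b) :
    0 ≤ safGrad (b + x) b * x := by
  rcases eq_or_lt_of_le hb with hb0 | hb0
  · have hx0 : x = 0 := le_antisymm (by linarith) (by linarith)
    simp [hx0]
  · set u := b + x with hu
    have hu0 : 0 ≤ u := by simp only [hu]; linarith
    have hA : (0:ℝ) < u ^ 4 + b ^ 4 := by positivity
    have key : ((2:ℝ) * b ^ 4) ^ ((1:ℝ)/4) = 2 ^ ((1:ℝ)/4) * b := by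
      rw [Real.mul_rpow (by norm_num) (by positivity)]
      congr 1
      rw [← Real.rpow_natCast b 4, ← Real.rpow_mul hb]
      norm_num
    have h2 : (0:ℝ) ≤ (u ^ 4 + b ^ 4) ^ (-(3:ℝ) / 4) := Real.rpow_nonneg hA.le _
    have h3 : (0:ℝ) ≤ u ^ 3 := by positivity
    unfold safGrad
    rcases le_or_gt 0 x with hx | hx
    · have hbu : b ≤ u := by simp only [hu]; linarith
      have h4 : b ^ 4 ≤ u ^ 4 := pow_le_pow_left₀ hb hbu 4
      have h1 : 2 ^ ((1:ℝ)/4) * b ≤ (u ^ 4 + b ^ 4) ^ ((1:ℝ)/4) := by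
        rw [← key]
        exact Real.rpow_le_rpow (by positivity) (by linarith) (by norm_num)
      exact mul_nonneg (mul_nonneg (mul_nonneg (by linarith) h2) h3) hx
    · have hbu : u ≤ b := by simp only [hu]; linarith
      have h4 : u ^ 4 ≤ b ^ 4 := pow_le_pow_left₀ hu0 hbu 4
      have h1 : (u ^ 4 + b ^ 4) ^ ((1:ℝ)/4) ≤ 2 ^ ((1:ℝ)/4) * b := by
        rw [← key]
        exact Real.rpow_le_rpow (by positivity) (by linarith) (by norm_num)
      have hprod : ((u ^ 4 + b ^ 4) ^ ((1:ℝ)/4) - 2 ^ ((1:ℝ)/4) * b) *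
          (u ^ 4 + b ^ 4) ^ (-(3:ℝ) / 4) * u ^ 3 ≤ 0 :=
        mul_nonpos_of_nonpos_of_nonneg
          (mul_nonpos_of_nonpos_of_nonneg (by linarith) h2) h3
      have := mul_nonneg (neg_nonneg.2 hprod) (neg_nonneg.2 hx.le)
      simpa using this
end

section
/- For every b ≥ 0 and every real x with -b ≤ x ≤ b, one has f(-b + x, b) · x ≥ 0, where f(x,y) = ((x^4 + y^4)^{1/4} - 2^{1/4} y) · (x^4 + y^4)^{-3/4} · x^3. -/
lemma two_rpow_mul (b : ℝ) (hb : 0 ≤ b) :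
    (2 * b ^ 4) ^ ((1 : ℝ) / 4) = (2 : ℝ) ^ ((1 : ℝ) / 4) * b := by
  rw [Real.mul_rpow (by norm_num) (by positivity), ← Real.rpow_natCast b 4,
    ← Real.rpow_mul hb]
  norm_num

/-- Sign property of the SAF gradient factor near `-b`. -/
theorem safGrad_sign_neg (b x : ℝ) (hb : 0 ≤ b) (hx₁ : -b ≤ x) (hx₂ : x ≤ b) :
    0 ≤ safGrad (-b + x) b * x := by
  set t : ℝ := -b + x with ht
  have ht0 : t ≤ 0 := by simp [ht]; linarith
  have ht3 : t ^ 3 ≤ 0 := by nlinarith [sq_nonneg t]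
  have hP : 0 ≤ (t ^ 4 + b ^ 4) ^ (-(3 : ℝ) / 4) :=
    Real.rpow_nonneg (by positivity) _
  rcases le_or_gt x 0 with hx | hx
  · -- x ≤ 0 : t ≤ -b, so t^4 ≥ b^4, first factor ≥ 0, safGrad ≤ 0
    have htb : -t ≥ b := by simp [ht]; linarith
    have h4 : b ^ 4 ≤ t ^ 4 := by
      have := pow_le_pow_left₀ hb htb 4
      rwa [Even.neg_pow (by decide) t] at this
    have hA : (2 : ℝ) ^ ((1 : ℝ) / 4) * b ≤ (t ^ 4 + b ^ 4) ^ ((1 : ℝ) / 4) := by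
      rw [← two_rpow_mul b hb]
      exact Real.rpow_le_rpow (by positivity) (by linarith) (by norm_num)
    have hAP : 0 ≤ ((t ^ 4 + b ^ 4) ^ ((1 : ℝ) / 4) - (2 : ℝ) ^ ((1 : ℝ) / 4) * b) *
        (t ^ 4 + b ^ 4) ^ (-(3 : ℝ) / 4) := mul_nonneg (by linarith) hP
    have hs : safGrad t b ≤ 0 := mul_nonpos_of_nonneg_of_nonpos hAP ht3
    nlinarith [mul_nonneg (neg_nonneg.mpr hs) (neg_nonneg.mpr hx)]
  · -- 0 ≤ x : -b ≤ t ≤ 0, so t^4 ≤ b^4, first factor ≤ 0, safGrad ≥ 0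
    have htb : -t ≤ b := by simp [ht]; linarith
    have h4 : t ^ 4 ≤ b ^ 4 := by
      have := pow_le_pow_left₀ (neg_nonneg.mpr ht0) htb 4
      rwa [Even.neg_pow (by decide) t] at this
    have hA : (t ^ 4 + b ^ 4) ^ ((1 : ℝ) / 4) ≤ (2 : ℝ) ^ ((1 : ℝ) / 4) * b := by
      rw [← two_rpow_mul b hb]
      exact Real.rpow_le_rpow (by positivity) (by linarith) (by norm_num)
    have hAP : ((t ^ 4 + b ^ 4) ^ ((1 : ℝ) / 4) - (2 : ℝ) ^ ((1 : ℝ) / 4) * b) *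
        (t ^ 4 + b ^ 4) ^ (-(3 : ℝ) / 4) ≤ 0 :=
      mul_nonpos_of_nonpos_of_nonneg (by linarith) hP
    have hs : 0 ≤ safGrad t b := by
      have := mul_nonneg (neg_nonneg.mpr hAP) (neg_nonneg.mpr ht3)
      simp only [safGrad]; nlinarith [this]
    exact mul_nonneg hs hx.le
end

section
/- For every b ≥ 0 and every real δ, one has |f(b + δ, b)| ≤ |δ|, where f(x,y) = ((x^4 + y^4)^{1/4} - 2^{1/4} y) · (x^4 + y^4)^{-3/4} · x^3. Consequently, |f(±b + δ, b)/δ| ≤ 1 whenever δ ≠ 0. -/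
lemma safGrad_key (u b p q : ℝ) (hu : 0 ≤ u) (hb : 0 ≤ b) (hp : 0 ≤ p) (hq : 0 ≤ q)
    (hp4 : p ^ 4 = u ^ 4 + b ^ 4) (hq4 : q ^ 4 = 2 * b ^ 4) :
    |p - q| ≤ |u - b| := by
  have hqb : b ≤ q := by
    rw [← pow_le_pow_iff_left₀ hb hq (n := 4) (by norm_num)]; nlinarith [pow_nonneg hb 4]
  have hpu : u ≤ p := by
    rw [← pow_le_pow_iff_left₀ hu hp (n := 4) (by norm_num)]; nlinarith [pow_nonneg hb 4]
  have hpb : b ≤ p := by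
    rw [← pow_le_pow_iff_left₀ hb hp (n := 4) (by norm_num)]; nlinarith [pow_nonneg hu 4]
  rw [abs_le]
  rcases le_total u b with h | h
  · rw [abs_of_nonpos (by linarith)]
    have hd : (0:ℝ) ≤ b - u := by linarith
    have hpu' : (0:ℝ) ≤ p - u := by linarith
    constructor
    · -- u - b ≤ p - q, i.e. q ≤ p + (b - u)
      have h4 : q ^ 4 ≤ (p + (b - u)) ^ 4 := by
        nlinarith [mul_nonneg hd hpu', mul_nonneg (mul_nonneg hd hd) hpu',
          mul_nonneg (mul_nonneg (mul_nonneg hd hd) hd) hpu',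
          mul_nonneg (mul_nonneg hd hpu') hu, mul_nonneg (mul_nonneg hd hpu') hp,
          mul_nonneg (mul_nonneg (mul_nonneg hd hpu') hp) hu,
          mul_nonneg (mul_nonneg (mul_nonneg hd hpu') hp) hp,
          mul_nonneg (mul_nonneg (mul_nonneg hd hpu') hu) hu,
          mul_nonneg (mul_nonneg (mul_nonneg hd hd) hpu') hu,
          mul_nonneg (mul_nonneg (mul_nonneg hd hd) hpu') hp]
      have := (pow_le_pow_iff_left₀ hq (by linarith) (n := 4) (by norm_num)).1 h4
      linarith
    · -- p - q ≤ b - u: here p ≤ q since p^4 ≤ q^4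
      have hpq : p ≤ q := by
        rw [← pow_le_pow_iff_left₀ hp hq (n := 4) (by norm_num)]
        have := pow_le_pow_left₀ hu h 4
        nlinarith
      linarith
  · rw [abs_of_nonneg (by linarith)]
    have hd : (0:ℝ) ≤ u - b := by linarith
    have hqb' : (0:ℝ) ≤ q - b := by linarith
    constructor
    · have hpq : q ≤ p := by
        rw [← pow_le_pow_iff_left₀ hq hp (n := 4) (by norm_num)]
        have := pow_le_pow_left₀ hb h 4
        nlinarith
      linarith
    · -- p ≤ q + (u - b)
      have h4 : p ^ 4 ≤ (q + (u - b)) ^ 4 := by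
        nlinarith [mul_nonneg hd hqb', mul_nonneg (mul_nonneg hd hd) hqb',
          mul_nonneg (mul_nonneg (mul_nonneg hd hd) hd) hqb',
          mul_nonneg (mul_nonneg hd hqb') hb, mul_nonneg (mul_nonneg hd hqb') hq,
          mul_nonneg (mul_nonneg (mul_nonneg hd hqb') hq) hb,
          mul_nonneg (mul_nonneg (mul_nonneg hd hqb') hq) hq,
          mul_nonneg (mul_nonneg (mul_nonneg hd hqb') hb) hb,
          mul_nonneg (mul_nonneg (mul_nonneg hd hd) hqb') hb,
          mul_nonneg (mul_nonneg (mul_nonneg hd hd) hqb') hq]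
      have := (pow_le_pow_iff_left₀ hp (by linarith) (n := 4) (by norm_num)).1 h4
      linarith

lemma safGrad_abs_le_aux (b δ : ℝ) (hb : 0 ≤ b) : |safGrad (b + δ) b| ≤ |δ| := by
  set a := b + δ with ha
  have hδ : δ = a - b := by rw [ha]; ring
  rcases eq_or_lt_of_le (by positivity : (0:ℝ) ≤ a ^ 4 + b ^ 4) with hs | hs
  · have h1 : (0:ℝ) ≤ a ^ 4 := by positivity
    have h2 : (0:ℝ) ≤ b ^ 4 := by positivity
    have ha4 : a ^ 4 = 0 := by linarith
    have ha0 : a = 0 := by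
      exact pow_eq_zero_iff (n := 4) (by norm_num) |>.1 ha4
    rw [ha0]
    simp [safGrad]
  · set s := a ^ 4 + b ^ 4 with hsdef
    set p := s ^ ((1:ℝ)/4) with hpdef
    have hp0 : 0 < p := Real.rpow_pos_of_pos hs _
    have hp4 : p ^ 4 = s := by
      rw [hpdef, ← Real.rpow_natCast (s ^ ((1:ℝ)/4)) 4, ← Real.rpow_mul hs.le]
      norm_num
    set q := (2:ℝ) ^ ((1:ℝ)/4) * b with hqdef
    have hq0 : 0 ≤ q := by positivity
    have hq4 : q ^ 4 = 2 * b ^ 4 := by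
      rw [hqdef, mul_pow, ← Real.rpow_natCast ((2:ℝ) ^ ((1:ℝ)/4)) 4,
        ← Real.rpow_mul (by norm_num)]
      norm_num
    have hs34 : s ^ (-(3:ℝ)/4) = (p ^ 3)⁻¹ := by
      rw [hpdef, ← Real.rpow_natCast (s ^ ((1:ℝ)/4)) 3, ← Real.rpow_mul hs.le,
        show (-(3:ℝ)/4) = -(1/4 * (3:ℕ)) by norm_num, Real.rpow_neg hs.le]
    have habs : |a| ^ 4 = a ^ 4 := by rw [← abs_pow, abs_of_nonneg (by positivity)]
    have hkey : |p - q| ≤ |δ| := by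
      have h1 := safGrad_key |a| b p q (abs_nonneg a) hb hp0.le hq0
        (by rw [hp4, hsdef, habs]) hq4
      calc |p - q| ≤ |(|a| - b)| := h1
        _ = |(|a| - |b|)| := by rw [abs_of_nonneg hb]
        _ ≤ |a - b| := abs_abs_sub_abs_le_abs_sub a b
        _ = |δ| := by rw [hδ]
    have hup : |a| ≤ p := by
      rw [← pow_le_pow_iff_left₀ (abs_nonneg a) hp0.le (n := 4) (by norm_num), hp4, hsdef,
        habs]
      nlinarith [pow_nonneg hb 4]
    have hcalc : |safGrad a b| = |p - q| * (p ^ 3)⁻¹ * |a| ^ 3 := by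
      simp only [safGrad]
      rw [← hsdef, ← hpdef, ← hqdef, hs34, abs_mul, abs_mul, abs_pow,
        abs_of_nonneg (by positivity : (0:ℝ) ≤ (p ^ 3)⁻¹)]
    rw [hcalc]
    calc |p - q| * (p ^ 3)⁻¹ * |a| ^ 3 ≤ |δ| * (p ^ 3)⁻¹ * p ^ 3 := by
          gcongr
        _ = |δ| := by field_simp

lemma safGrad_neg_left (x y : ℝ) : safGrad (-x) y = -safGrad x y := by
  simp [safGrad]; ring

/-- Property 4: `|f(b+δ, b)| ≤ |δ|`, hence `|f(±b+δ, b)/δ| ≤ 1` for `δ ≠ 0`. -/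
theorem safGrad_abs_le (b δ : ℝ) (hb : 0 ≤ b) :
    |safGrad (b + δ) b| ≤ |δ| ∧
      (δ ≠ 0 → |safGrad (b + δ) b / δ| ≤ 1 ∧ |safGrad (-b + δ) b / δ| ≤ 1) := by
  have h1 := safGrad_abs_le_aux b δ hb
  refine ⟨h1, fun hδ => ?_⟩
  have hδ' : 0 < |δ| := abs_pos.2 hδ
  constructor
  · rw [abs_div, div_le_one hδ']; exact h1
  · rw [abs_div, div_le_one hδ']
    have h2 := safGrad_abs_le_aux b (-δ) hb
    have heq : -b + δ = -(b + -δ) := by ring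
    rw [heq, safGrad_neg_left, abs_neg]
    simpa using h2
end

section
/- Let ℓ : ℝⁿ → ℝ be differentiable, x ∈ ℝⁿ, and suppose the regularity condition ⟨∇ℓ(z), z - x⟩ ≥ (μ/2)‖∇ℓ(z)‖² + (λ/2)‖z - x‖² holds for all z with ‖z - x‖ ≤ ε‖x‖, with μλ < 1. If z₀ satisfies ‖z₀ - x‖ ≤ ε‖x‖, then the iterates z_{t+1} = z_t - μ∇ℓ(z_t) satisfy ‖z_t - x‖ ≤ (1 - μλ)^{t/2} ε ‖x‖ for all t ≥ 0; in particular all iterates remain in the ball and z_t → x. -/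
/-!
Expanding `‖(z - x) - μ ∇ℓ(z)‖²` and bounding the cross term by the regularity condition shows
that one gradient step contracts the distance to `x` by the factor `√(1 - μλ)` whenever `z`
lies in the ball. Since `√(1 - μλ) ≤ 1`, the contracted iterate is again in the ball, so by
induction the contraction applies at every step and the distances decay geometrically.
-/

open Filter

section OneStep

variable {E : Type*} [NormedAddCommGroup E] [InnerProductSpace ℝ E]

theorem norm_sub_smul_sq_le_of_regularity {d g : E} {μ lam : ℝ} (hμ : 0 ≤ μ)
    (h : μ / 2 * ‖g‖ ^ 2 + lam / 2 * ‖d‖ ^ 2 ≤ inner ℝ g d) :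
    ‖d - μ • g‖ ^ 2 ≤ (1 - μ * lam) * ‖d‖ ^ 2 := by
  rw [norm_sub_sq_real, norm_smul, Real.norm_of_nonneg hμ, real_inner_smul_right,
    real_inner_comm]
  nlinarith [mul_le_mul_of_nonneg_left h (by positivity : (0 : ℝ) ≤ 2 * μ)]

theorem norm_sub_smul_le_of_regularity {d g : E} {μ lam : ℝ} (hμ : 0 ≤ μ)
    (h : μ / 2 * ‖g‖ ^ 2 + lam / 2 * ‖d‖ ^ 2 ≤ inner ℝ g d) :
    ‖d - μ • g‖ ≤ √(1 - μ * lam) * ‖d‖ :=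
  calc ‖d - μ • g‖ ≤ √((1 - μ * lam) * ‖d‖ ^ 2) := by
        simpa using Real.abs_le_sqrt (norm_sub_smul_sq_le_of_regularity hμ h)
    _ = √(1 - μ * lam) * ‖d‖ := by
        rw [Real.sqrt_mul' _ (sq_nonneg _), Real.sqrt_sq (norm_nonneg _)]

end OneStep

theorem le_pow_mul_of_le_mul_within {u : ℕ → ℝ} {ρ R : ℝ} (hρ0 : 0 ≤ ρ) (hρ1 : ρ ≤ 1)
    (hR : 0 ≤ R) (h0 : u 0 ≤ R) (hstep : ∀ t, u t ≤ R → u (t + 1) ≤ ρ * u t) (t : ℕ) :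
    u t ≤ ρ ^ t * R := by
  induction t with
  | zero => simpa using h0
  | succ t ih =>
    have hball : u t ≤ R := ih.trans (mul_le_of_le_one_left hR (pow_le_one₀ hρ0 hρ1))
    calc u (t + 1) ≤ ρ * u t := hstep t hball
      _ ≤ ρ * (ρ ^ t * R) := mul_le_mul_of_nonneg_left ih hρ0
      _ = ρ ^ (t + 1) * R := by ring

theorem tendsto_of_norm_sub_le_pow_mul {E : Type*} [SeminormedAddCommGroup E] {z : ℕ → E}
    {x : E} {ρ C : ℝ} (hρ0 : 0 ≤ ρ) (hρ1 : ρ < 1) (h : ∀ t, ‖z t - x‖ ≤ ρ ^ t * C) :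
    Tendsto z atTop (nhds x) :=
  tendsto_sub_nhds_zero_iff.mp <| squeeze_zero_norm h <| by
    simpa using (tendsto_pow_atTop_nhds_zero_of_lt_one hρ0 hρ1).mul_const C

theorem regularity_geometric_convergence_general {n : ℕ}
    (ℓ : EuclideanSpace ℝ (Fin n) → ℝ)
    (x : EuclideanSpace ℝ (Fin n)) (μ lam ε : ℝ)
    (hμ : 0 < μ) (hlam : 0 < lam)
    (hRC : ∀ z : EuclideanSpace ℝ (Fin n), ‖z - x‖ ≤ ε * ‖x‖ →
      (μ / 2) * ‖gradient ℓ z‖ ^ 2 + (lam / 2) * ‖z - x‖ ^ 2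
        ≤ (inner ℝ (gradient ℓ z) (z - x) : ℝ))
    (hμlam : μ * lam < 1)
    (z : ℕ → EuclideanSpace ℝ (Fin n))
    (h0 : ‖z 0 - x‖ ≤ ε * ‖x‖)
    (hrec : ∀ t : ℕ, z (t + 1) = z t - μ • gradient ℓ (z t)) :
    (∀ t : ℕ, ‖z t - x‖ ≤ (1 - μ * lam) ^ ((t : ℝ) / 2) * (ε * ‖x‖)) ∧
    (∀ t : ℕ, ‖z t - x‖ ≤ ε * ‖x‖) ∧
    Tendsto z atTop (nhds x) := by
  set ρ := √(1 - μ * lam)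
  have hρ0 : 0 ≤ ρ := Real.sqrt_nonneg _
  have hρ1 : ρ < 1 := (Real.sqrt_lt' one_pos).2 (by nlinarith)
  have hR : 0 ≤ ε * ‖x‖ := (norm_nonneg _).trans h0
  have hgeom (t : ℕ) : ‖z t - x‖ ≤ ρ ^ t * (ε * ‖x‖) := by
    refine le_pow_mul_of_le_mul_within (u := fun t => ‖z t - x‖) hρ0 hρ1.le hR h0 (fun s hs => ?_) t
    rw [hrec, sub_right_comm]
    exact norm_sub_smul_le_of_regularity hμ.le (hRC _ hs)
  refine ⟨fun t => ?_, fun t => ?_, tendsto_of_norm_sub_le_pow_mul hρ0 hρ1 hgeom⟩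
  · rw [Real.rpow_div_two_eq_sqrt _ (by linarith), Real.rpow_natCast]
    exact hgeom t
  · exact (hgeom t).trans (mul_le_of_le_one_left hR (pow_le_one₀ hρ0 hρ1.le))

/-- Geometric convergence of fixed-step gradient descent under the local
regularity condition RC(μ, λ, ε): iterates stay in the ball and converge to `x`. -/
theorem regularity_geometric_convergence {n : ℕ}
    (ℓ : EuclideanSpace ℝ (Fin n) → ℝ) (hℓ : Differentiable ℝ ℓ)
    (x : EuclideanSpace ℝ (Fin n)) (μ lam ε : ℝ)
    (hμ : 0 < μ) (hlam : 0 < lam) (hε0 : 0 < ε) (hε1 : ε < 1)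
    (hRC : ∀ z : EuclideanSpace ℝ (Fin n), ‖z - x‖ ≤ ε * ‖x‖ →
      (μ / 2) * ‖gradient ℓ z‖ ^ 2 + (lam / 2) * ‖z - x‖ ^ 2
        ≤ (inner ℝ (gradient ℓ z) (z - x) : ℝ))
    (hμlam : μ * lam < 1)
    (z : ℕ → EuclideanSpace ℝ (Fin n))
    (h0 : ‖z 0 - x‖ ≤ ε * ‖x‖)
    (hrec : ∀ t : ℕ, z (t + 1) = z t - μ • gradient ℓ (z t)) :
    (∀ t : ℕ, ‖z t - x‖ ≤ (1 - μ * lam) ^ ((t : ℝ) / 2) * (ε * ‖x‖)) ∧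
    (∀ t : ℕ, ‖z t - x‖ ≤ ε * ‖x‖) ∧
    Tendsto z atTop (nhds x) :=
  regularity_geometric_convergence_general ℓ x μ lam ε hμ hlam hRC hμlam z h0 hrec
end
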